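/- Let T be a game tree and A ⊆ ℕ^ℕ, and suppose player I has no winning strategy in G(A ∩ [T]; T). Then II's non-losing quasi-strategy T' = {p ∈ T : for every prefix q of p of even length, I has no winning strategy in G(A ∩ [T_q]; T_q)} is a quasi-strategy for II in T, and moreover for every p ∈ T', player I has no winning strategy in G(A ∩ [T'_p]; T'_p). -/
import Mathlib


/-- `T ⊆ List ℕ` is a game tree: nonempty, closed under prefixes, and with no
terminal nodes. -/
def IsGameTree (T : Set (List ℕ)) : Prop :=
  T.Nonempty ∧ (∀ p ∈ T, ∀ q : List ℕ, q <+: p → q ∈ T) ∧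
    ∀ p ∈ T, ∃ n : ℕ, p ++ [n] ∈ T

/-- The finite initial segment of `x : ℕ → ℕ` of length `k`, as a list. -/
def seg (x : ℕ → ℕ) (k : ℕ) : List ℕ := (List.range k).map x

/-- The body `[T]` of a tree: all infinite plays whose finite initial segments
all lie in `T`. -/
def body (T : Set (List ℕ)) : Set (ℕ → ℕ) := {x | ∀ k, seg x k ∈ T}

/-- The localization `T_p` of `T` at a position `p`: all positions comparable
with `p`. -/
def restrict (T : Set (List ℕ)) (p : List ℕ) : Set (List ℕ) :=
  {q ∈ T | q <+: p ∨ p <+: q}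

/-- `x` is a play consistent with `σ` used as a strategy for player I, who
moves at even stages. -/
def ConsWithI (σ : List ℕ → ℕ) (x : ℕ → ℕ) : Prop :=
  ∀ k, Even k → x k = σ (seg x k)

/-- `x` is a play consistent with `σ` used as a strategy for player II, who
moves at odd stages. -/
def ConsWithII (σ : List ℕ → ℕ) (x : ℕ → ℕ) : Prop :=
  ∀ k, ¬ Even k → x k = σ (seg x k)

/-- `σ` is a winning strategy for player I in the game `G(A; T)`: it assigns a
legal move at every position of `T` where it is I's turn, and every play in
`[T]` consistent with it lies in `A`. -/
def WinStratI (T : Set (List ℕ)) (A : Set (ℕ → ℕ)) (σ : List ℕ → ℕ) : Prop :=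
  (∀ p ∈ T, Even p.length → p ++ [σ p] ∈ T) ∧
    ∀ x ∈ body T, ConsWithI σ x → x ∈ A

/-- `σ` is a winning strategy for player II in the game `G(A; T)`: it assigns a
legal move at every position of `T` where it is II's turn, and every play in
`[T]` consistent with it lies outside `A`. -/
def WinStratII (T : Set (List ℕ)) (A : Set (ℕ → ℕ)) (σ : List ℕ → ℕ) : Prop :=
  (∀ p ∈ T, ¬ Even p.length → p ++ [σ p] ∈ T) ∧
    ∀ x ∈ body T, ConsWithII σ x → x ∉ A

/-- `S` is a quasi-strategy for player II in the game tree `T`: a game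
subtree which does not restrict I's moves. -/
def QuasiII (T S : Set (List ℕ)) : Prop :=
  IsGameTree S ∧ S ⊆ T ∧
    ∀ p ∈ S, Even p.length → ∀ n : ℕ, p ++ [n] ∈ T → p ++ [n] ∈ S

/-- Player II's non-losing quasi-strategy `T'` for `G(A ∩ [T]; T)`. -/
def NonLosing (T : Set (List ℕ)) (A : Set (ℕ → ℕ)) : Set (List ℕ) :=
  {p ∈ T | ∀ q : List ℕ, q <+: p → Even q.length →
    ¬ ∃ σ, WinStratI (restrict T q) (A ∩ body (restrict T q)) σ}

/-- A position `p` of `T'` is good (w.r.t. `A` and `B ⊆ A`) if there is a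
quasi-strategy `S` for II in `T'_p` with `[S] ∩ B = ∅` such that I has no
winning strategy in `G(A ∩ [S]; S)`. -/
def Good (T' : Set (List ℕ)) (A B : Set (ℕ → ℕ)) (p : List ℕ) : Prop :=
  p ∈ T' ∧ ∃ S : Set (List ℕ), QuasiII (restrict T' p) S ∧ body S ∩ B = ∅ ∧
    ¬ ∃ σ, WinStratI S (A ∩ body S) σ

/-! ### Auxiliary lemmas -/

lemma seg_length (x : ℕ → ℕ) (k : ℕ) : (seg x k).length = k := by simp [seg]

lemma seg_succ (x : ℕ → ℕ) (k : ℕ) : seg x (k + 1) = seg x k ++ [x k] := by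
  simp [seg, List.range_succ]

lemma seg_take (x : ℕ → ℕ) {k j : ℕ} (h : k ≤ j) : (seg x j).take k = seg x k := by
  simp [seg, ← List.map_take, List.take_range, Nat.min_eq_left h]

lemma seg_prefix (x : ℕ → ℕ) {k j : ℕ} (h : k ≤ j) : seg x k <+: seg x j := by
  rw [← seg_take x h]; exact List.take_prefix _ _

lemma seg_zero (x : ℕ → ℕ) : seg x 0 = [] := rfl

lemma pref_comp {u v w : List ℕ} (hu : u <+: w) (hv : v <+: w) : u <+: v ∨ v <+: u := by
  rcases le_total u.length v.length with h | h
  · exact Or.inl (List.prefix_of_prefix_length_le hu hv h)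
  · exact Or.inr (List.prefix_of_prefix_length_le hv hu h)

lemma pref_of_comp {u w : List ℕ} (h : u <+: w ∨ w <+: u) (hl : u.length ≤ w.length) :
    u <+: w := by
  rcases h with h | h
  · exact h
  · have := List.IsPrefix.eq_of_length h (le_antisymm h.length_le hl)
    rw [this]

lemma getD_eq_of_append_prefix {p q : List ℕ} {a : ℕ} (h : p ++ [a] <+: q) :
    q.getD p.length 0 = a := by
  obtain ⟨t, rfl⟩ := h
  rw [List.append_assoc, List.singleton_append,
    List.getD_append_right _ _ _ _ (le_refl _)]
  simp

lemma exists_next {p q : List ℕ} (h : p <+: q) (hl : p.length < q.length) :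
    p ++ [q.getD p.length 0] <+: q := by
  obtain ⟨t, rfl⟩ := h
  cases t with
  | nil => simp at hl
  | cons a t =>
    have ha : (p ++ a :: t).getD p.length 0 = a := by
      rw [List.getD_append_right _ _ _ _ (le_refl _)]; simp
    rw [ha]
    exact ⟨t, by simp⟩

lemma seg_getD {x : ℕ → ℕ} {i k : ℕ} (h : i < k) : (seg x k).getD i 0 = x i := by
  have h1 : seg x i ++ [x i] <+: seg x k := by
    rw [← seg_succ]; exact seg_prefix x h
  have h2 := getD_eq_of_append_prefix h1
  rwa [seg_length] at h2

lemma forced_move {S : Set (List ℕ)} {w u : List ℕ} {a : ℕ} {σ : List ℕ → ℕ}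
    (hleg : ∀ v ∈ restrict S w, Even v.length → v ++ [σ v] ∈ restrict S w)
    (hu : u ∈ S) (hpre : u ++ [a] <+: w) (he : Even u.length) : σ u = a := by
  have huw : u <+: w := (List.prefix_append u [a]).trans hpre
  have h1 : u ++ [σ u] ∈ restrict S w := hleg u ⟨hu, Or.inl huw⟩ he
  have hlen : (u ++ [a]).length ≤ w.length := hpre.length_le
  have h2 : u ++ [σ u] <+: w := pref_of_comp h1.2 (by simpa using hlen)
  have h3 : u ++ [σ u] <+: u ++ [a] :=
    List.prefix_of_prefix_length_le h2 hpre (by simp)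
  have heq : u ++ [σ u] = u ++ [a] := List.IsPrefix.eq_of_length h3 (by simp)
  simpa using heq

lemma restrict_nil (T : Set (List ℕ)) : restrict T [] = T := by
  ext q; simp [restrict, List.nil_prefix]

lemma restrict_mono {T T' : Set (List ℕ)} {p q : List ℕ} (hsub : T' ⊆ T)
    (hq : q <+: p) : restrict T' p ⊆ restrict T q := by
  rintro v ⟨hv, hc | hc⟩
  · exact ⟨hsub hv, pref_comp hc hq⟩
  · exact ⟨hsub hv, Or.inr (hq.trans hc)⟩

lemma seg_mem_eq {T : Set (List ℕ)} {q : List ℕ} {x : ℕ → ℕ}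
    (hx : x ∈ body (restrict T q)) : seg x q.length = q := by
  have h := (hx q.length).2
  rcases h with h2 | h2
  · exact List.IsPrefix.eq_of_length h2 (by simp [seg_length])
  · exact (List.IsPrefix.eq_of_length h2 (by simp [seg_length])).symm

lemma nonLosing_prefix {T : Set (List ℕ)} {A : Set (ℕ → ℕ)} (hT : IsGameTree T)
    {p q : List ℕ} (hp : p ∈ NonLosing T A) (hq : q <+: p) : q ∈ NonLosing T A :=
  ⟨hT.2.1 p hp.1 q hq, fun r hr he => hp.2 r (hr.trans hq) he⟩

/-! ### Choice-based strategy combinators -/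

open Classical in
noncomputable def chooseWS (T : Set (List ℕ)) (A : Set (ℕ → ℕ)) (w : List ℕ) :
    List ℕ → ℕ :=
  if h : ∃ τ, WinStratI (restrict T w) (A ∩ body (restrict T w)) τ then h.choose
  else fun _ => 0

lemma chooseWS_spec {T : Set (List ℕ)} {A : Set (ℕ → ℕ)} {w : List ℕ}
    (h : ∃ τ, WinStratI (restrict T w) (A ∩ body (restrict T w)) τ) :
    WinStratI (restrict T w) (A ∩ body (restrict T w)) (chooseWS T A w) := by
  rw [chooseWS, dif_pos h]; exact h.choose_spec

open Classical in
noncomputable def legalMove (T : Set (List ℕ)) (u : List ℕ) : ℕ :=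
  if h : ∃ m, u ++ [m] ∈ T then h.choose else 0

lemma legalMove_spec {T : Set (List ℕ)} {u : List ℕ} (h : ∃ m, u ++ [m] ∈ T) :
    u ++ [legalMove T u] ∈ T := by
  rw [legalMove, dif_pos h]; exact h.choose_spec

open Classical in
noncomputable def stratA (T : Set (List ℕ)) (A : Set (ℕ → ℕ)) (p u : List ℕ) : ℕ :=
  if u.length < p.length then p.getD u.length 0
  else if p <+: u ∧ p.length < u.length then
    chooseWS T A (p ++ [u.getD p.length 0]) u
  else legalMove T u

lemma stratA_lt {T : Set (List ℕ)} {A : Set (ℕ → ℕ)} {p u : List ℕ}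
    (h : u.length < p.length) : stratA T A p u = p.getD u.length 0 := by
  rw [stratA, if_pos h]

lemma stratA_ext {T : Set (List ℕ)} {A : Set (ℕ → ℕ)} {p u : List ℕ}
    (h1 : ¬ u.length < p.length) (h2 : p <+: u) (h3 : p.length < u.length) :
    stratA T A p u = chooseWS T A (p ++ [u.getD p.length 0]) u := by
  rw [stratA, if_neg h1, if_pos ⟨h2, h3⟩]

lemma stratA_other {T : Set (List ℕ)} {A : Set (ℕ → ℕ)} {p u : List ℕ}
    (h1 : ¬ u.length < p.length) (h2 : ¬ (p <+: u ∧ p.length < u.length)) :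
    stratA T A p u = legalMove T u := by
  rw [stratA, if_neg h1, if_neg h2]

noncomputable def wOf (P : Set (List ℕ)) (u : List ℕ) : List ℕ :=
  u.take (sInf {j | u.take j ∉ P})

open Classical in
noncomputable def stratB (T P : Set (List ℕ)) (A : Set (ℕ → ℕ))
    (σ : List ℕ → ℕ) (u : List ℕ) : ℕ :=
  if u ∈ P then σ u
  else if ∃ τ, WinStratI (restrict T (wOf P u)) (A ∩ body (restrict T (wOf P u))) τ
    then chooseWS T A (wOf P u) u
  else legalMove T u

lemma stratB_mem {T P : Set (List ℕ)} {A : Set (ℕ → ℕ)} {σ : List ℕ → ℕ}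
    {u : List ℕ} (h : u ∈ P) : stratB T P A σ u = σ u := by
  rw [stratB, if_pos h]

lemma stratB_ws {T P : Set (List ℕ)} {A : Set (ℕ → ℕ)} {σ : List ℕ → ℕ}
    {u : List ℕ} (h : u ∉ P)
    (hτ : ∃ τ, WinStratI (restrict T (wOf P u)) (A ∩ body (restrict T (wOf P u))) τ) :
    stratB T P A σ u = chooseWS T A (wOf P u) u := by
  rw [stratB, if_neg h, if_pos hτ]

lemma stratB_leg {T P : Set (List ℕ)} {A : Set (ℕ → ℕ)} {σ : List ℕ → ℕ}
    {u : List ℕ} (h : u ∉ P)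
    (hτ : ¬ ∃ τ, WinStratI (restrict T (wOf P u)) (A ∩ body (restrict T (wOf P u))) τ) :
    stratB T P A σ u = legalMove T u := by
  rw [stratB, if_neg h, if_neg hτ]

/-! ### Part 1 hard case: extending an odd-length position inside `NonLosing` -/

lemma nl_extend (T : Set (List ℕ)) (hT : IsGameTree T) (A : Set (ℕ → ℕ))
    {p : List ℕ} (hp : p ∈ NonLosing T A) (hodd : ¬ Even p.length) :
    ∃ n, p ++ [n] ∈ NonLosing T A := by
  by_contra hcon
  push_neg at hcon
  have hpreT := hT.2.1
  -- every legal extension of `p` hands player I a winning strategy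
  have hws : ∀ n, p ++ [n] ∈ T →
      ∃ τ, WinStratI (restrict T (p ++ [n])) (A ∩ body (restrict T (p ++ [n]))) τ := by
    intro n hn
    by_contra hno
    apply hcon n
    refine ⟨hn, ?_⟩
    intro q hq hqe
    rcases lt_or_ge q.length (p.length + 1) with hl | hl
    · exact hp.2 q (List.prefix_of_prefix_length_le hq (List.prefix_append p [n])
        (by omega)) hqe
    · have hql : q = p ++ [n] :=
        List.IsPrefix.eq_of_length hq
          (le_antisymm hq.length_le (by simpa using hl))
      rw [hql]; exact hno
  have hp0 : p ≠ [] := by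
    intro h; rw [h] at hodd; exact hodd (by simp)
  have hrp : p.dropLast <+: p := List.dropLast_prefix p
  have hrlen : p.dropLast.length + 1 = p.length := by
    rw [List.length_dropLast]
    have := List.length_pos_iff.mpr hp0
    omega
  have hre : Even p.dropLast.length := by
    rw [Nat.even_iff]
    rw [Nat.not_even_iff] at hodd
    omega
  have hσleg : ∀ u ∈ restrict T p.dropLast, Even u.length →
      u ++ [stratA T A p u] ∈ restrict T p.dropLast := by
    intro u hu he
    rcases lt_trichotomy u.length p.length with hl | hl | hl
    · have hur : u <+: p.dropLast := pref_of_comp hu.2 (by omega)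
      have hup : u <+: p := hur.trans hrp
      rw [stratA_lt hl]
      have hnext : u ++ [p.getD u.length 0] <+: p := exists_next hup hl
      exact ⟨hpreT p hp.1 _ hnext, pref_comp hnext hrp⟩
    · exfalso; rw [hl] at he; exact hodd he
    · have hru : p.dropLast <+: u := by
        rcases hu.2 with h | h
        · exact absurd h.length_le (by omega)
        · exact h
      by_cases hpu : p <+: u
      · rw [stratA_ext (by omega) hpu hl]
        have hnext : p ++ [u.getD p.length 0] <+: u := exists_next hpu hl
        have hpn : p ++ [u.getD p.length 0] ∈ T := hpreT u hu.1 _ hnext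
        have hFn := chooseWS_spec (hws _ hpn)
        have hlegu := hFn.1 u ⟨hu.1, Or.inr hnext⟩ he
        exact ⟨hlegu.1, Or.inr (hru.trans (List.prefix_append u _))⟩
      · rw [stratA_other (by omega) (by tauto)]
        exact ⟨legalMove_spec (hT.2.2 u hu.1),
          Or.inr (hru.trans (List.prefix_append u _))⟩
  have hσwin : ∀ x ∈ body (restrict T p.dropLast), ConsWithI (stratA T A p) x →
      x ∈ A ∩ body (restrict T p.dropLast) := by
    intro x hx hcons
    have hsegr : seg x p.dropLast.length = p.dropLast := seg_mem_eq hx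
    have hxr : x p.dropLast.length = p.getD p.dropLast.length 0 := by
      have h := hcons p.dropLast.length hre
      rw [hsegr] at h
      rw [h, stratA_lt (by omega)]
    have hsegp : seg x p.length = p := by
      rw [← hrlen, seg_succ, hsegr, hxr]
      exact List.IsPrefix.eq_of_length (exists_next hrp (by omega)) (by simp; omega)
    have hsegpn : seg x (p.length + 1) = p ++ [x p.length] := by
      rw [seg_succ, hsegp]
    have hpnT : p ++ [x p.length] ∈ T := by
      have := (hx (p.length + 1)).1
      rwa [hsegpn] at this
    have hFn := chooseWS_spec (hws _ hpnT)
    have hxbody : x ∈ body (restrict T (p ++ [x p.length])) := by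
      intro k
      refine ⟨(hx k).1, ?_⟩
      rcases le_or_gt k (p.length + 1) with h | h
      · left; rw [← hsegpn]; exact seg_prefix x h
      · right; rw [← hsegpn]; exact seg_prefix x (by omega)
    have hxcons : ConsWithI (chooseWS T A (p ++ [x p.length])) x := by
      intro k hk
      rcases lt_or_ge k (p.length + 1) with h | h
      · have hpre : seg x k ++ [x k] <+: p ++ [x p.length] := by
          rw [← seg_succ, ← hsegpn]; exact seg_prefix x (by omega)
        exact (forced_move hFn.1 (hx k).1 hpre (by rw [seg_length]; exact hk)).symm
      · have hxk := hcons k hk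
        have hplen : p <+: seg x k := by
          rw [← hsegp]; exact seg_prefix x (by omega)
        have hget : (seg x k).getD p.length 0 = x p.length := seg_getD (by omega)
        rw [hxk, stratA_ext (by rw [seg_length]; omega) hplen
          (by rw [seg_length]; omega), hget]
    have hwin := hFn.2 x hxbody hxcons
    exact ⟨hwin.1, hx⟩
  exact hp.2 p.dropLast hrp hre ⟨stratA T A p, hσleg, hσwin⟩

/-! ### Part 2: no winning strategy on the restricted tree -/

lemma nl_no_ws (T : Set (List ℕ)) (hT : IsGameTree T) (A : Set (ℕ → ℕ))
    {p : List ℕ} (hp : p ∈ NonLosing T A) :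
    ¬ ∃ σ, WinStratI (restrict (NonLosing T A) p)
        (A ∩ body (restrict (NonLosing T A) p)) σ := by
  classical
  rintro ⟨σ, hleg, hwin⟩
  set P := restrict (NonLosing T A) p with hPdef
  set q := if Even p.length then p else p.dropLast with hqdef
  have hqlen : (Even p.length ∧ q = p) ∨ (¬ Even p.length ∧ q.length + 1 = p.length) := by
    by_cases h : Even p.length
    · left; exact ⟨h, by rw [hqdef, if_pos h]⟩
    · right
      refine ⟨h, ?_⟩
      have hp0 : p ≠ [] := by
        intro hh; rw [hh] at h; exact h (by simp)
      rw [hqdef, if_neg h, List.length_dropLast]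
      have := List.length_pos_iff.mpr hp0
      omega
  have hqp : q <+: p := by
    rw [hqdef]; split_ifs
    · exact List.prefix_rfl
    · exact List.dropLast_prefix p
  have hqe : Even q.length := by
    rcases hqlen with ⟨hpe, hqq⟩ | ⟨hpo, hqq⟩
    · rw [hqq]; exact hpe
    · rw [Nat.even_iff]
      rw [Nat.not_even_iff] at hpo
      omega
  have hnoq : ¬ ∃ τ, WinStratI (restrict T q) (A ∩ body (restrict T q)) τ :=
    hp.2 q hqp hqe
  have hpreP : ∀ u, u <+: p → u ∈ P := fun u hu =>
    ⟨nonLosing_prefix hT hp hu, Or.inl hu⟩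
  have hPsub : P ⊆ restrict T q := restrict_mono (fun v hv => hv.1) hqp
  apply hnoq
  refine ⟨stratB T P A σ, ?_, ?_⟩
  · -- legality
    intro u hu he
    by_cases huP : u ∈ P
    · rw [stratB_mem huP]
      exact hPsub (hleg u huP he)
    · have hqu : q <+: u := by
        rcases hu.2 with h | h
        · exact absurd (hpreP u (h.trans hqp)) huP
        · exact h
      by_cases hτ : ∃ τ, WinStratI (restrict T (wOf P u))
          (A ∩ body (restrict T (wOf P u))) τ
      · rw [stratB_ws huP hτ]
        have hl := (chooseWS_spec hτ).1 u ⟨hu.1, Or.inr (List.take_prefix _ _)⟩ he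
        exact ⟨hl.1, Or.inr (hqu.trans (List.prefix_append u _))⟩
      · rw [stratB_leg huP hτ]
        exact ⟨legalMove_spec (hT.2.2 u hu.1),
          Or.inr (hqu.trans (List.prefix_append u _))⟩
  · -- winning
    intro x hx hcons
    by_cases hall : ∀ k, seg x k ∈ P
    · have hconsσ : ConsWithI σ x := by
        intro k hk
        rw [hcons k hk, stratB_mem (hall k)]
      exact ⟨(hwin x hall hconsσ).1, hx⟩
    · push_neg at hall
      have hKne : {j | seg x j ∉ P}.Nonempty := hall
      set k := sInf {j | seg x j ∉ P} with hkdef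
      have hkK : seg x k ∉ P := Nat.sInf_mem hKne
      have hmin : ∀ i, i < k → seg x i ∈ P := by
        intro i hi
        by_contra h
        have := Nat.sInf_le (show i ∈ {j | seg x j ∉ P} from h)
        omega
      have hk0 : k ≠ 0 := by
        intro h
        apply hkK
        rw [h, seg_zero]
        exact hpreP [] List.nil_prefix
      have hvP : seg x (k - 1) ∈ P := hmin _ (by omega)
      have hvw : seg x (k - 1) ++ [x (k - 1)] = seg x k := by
        rw [← seg_succ]; congr 1; omega
      have hke : Even k := by
        by_contra hko
        have he1 : Even (k - 1) := by
          rw [Nat.even_iff]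
          rw [Nat.not_even_iff] at hko
          omega
        have hx1 := hcons (k - 1) he1
        rw [stratB_mem hvP] at hx1
        apply hkK
        rw [← hvw, hx1]
        exact hleg _ hvP (by rw [seg_length]; exact he1)
      have hpw : p <+: seg x k := by
        rcases hvP.2 with h | h
        · by_cases hvp : seg x (k - 1) = p
          · rw [← hvw, hvp]; exact List.prefix_append p _
          · exfalso
            have hvl : (seg x (k - 1)).length < p.length :=
              lt_of_le_of_ne h.length_le
                (fun hh => hvp (List.IsPrefix.eq_of_length h hh))
            rw [seg_length] at hvl
            apply hkK
            have hwq : (seg x k).length ≤ q.length := by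
              rw [seg_length]
              rcases hqlen with ⟨hpe, hqq⟩ | ⟨hpo, hqq⟩
              · rw [hqq]; omega
              · rw [Nat.even_iff] at hke
                rw [Nat.not_even_iff] at hpo
                omega
            have hwq' : seg x k <+: q := pref_of_comp (hx k).2 hwq
            exact hpreP _ (hwq'.trans hqp)
        · exact h.trans (by rw [← hvw]; exact List.prefix_append _ _)
      have hwT : seg x k ∈ T := (hx k).1
      have hwT' : seg x k ∉ NonLosing T A := fun h => hkK ⟨h, Or.inr hpw⟩
      have hτw : ∃ τ, WinStratI (restrict T (seg x k))
          (A ∩ body (restrict T (seg x k))) τ := by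
        by_contra hno
        apply hwT'
        refine ⟨hwT, ?_⟩
        intro u hu hue
        rcases lt_or_ge u.length k with hl | hl
        · have huv : u <+: seg x (k - 1) := by
            apply List.prefix_of_prefix_length_le hu
            · rw [← hvw]; exact List.prefix_append _ _
            · rw [seg_length]; omega
          exact hvP.1.2 u huv hue
        · have hueq : u = seg x k :=
            List.IsPrefix.eq_of_length hu
              (le_antisymm hu.length_le (by rw [seg_length]; exact hl))
          rw [hueq]; exact hno
      have hτspec := chooseWS_spec hτw
      have hxw : x ∈ body (restrict T (seg x k)) := by
        intro j
        refine ⟨(hx j).1, ?_⟩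
        rcases le_or_gt j k with h | h
        · left; exact seg_prefix x h
        · right; exact seg_prefix x (le_of_lt h)
      have hconsτ : ConsWithI (chooseWS T A (seg x k)) x := by
        intro j hj
        rcases lt_or_ge j k with h | h
        · have hpre : seg x j ++ [x j] <+: seg x k := by
            rw [← seg_succ]; exact seg_prefix x (by omega)
          exact (forced_move hτspec.1 (hx j).1 hpre
            (by rw [seg_length]; exact hj)).symm
        · have hjP : seg x j ∉ P := by
            intro hmem
            exact hwT' (nonLosing_prefix hT hmem.1 (seg_prefix x h))
          have hwOf : wOf P (seg x j) = seg x k := by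
            have h1 : k ∈ {i | (seg x j).take i ∉ P} := by
              rw [Set.mem_setOf_eq, seg_take x h]; exact hkK
            have h2 : sInf {i | (seg x j).take i ∉ P} = k := by
              apply le_antisymm (Nat.sInf_le h1)
              by_contra hlt
              push_neg at hlt
              have hmem := Nat.sInf_mem (⟨k, h1⟩ :
                {i | (seg x j).take i ∉ P}.Nonempty)
              rw [Set.mem_setOf_eq,
                seg_take x (le_trans (le_of_lt hlt) h)] at hmem
              exact hmem (hmin _ hlt)
            rw [wOf, h2, seg_take x h]
          have hτ' : ∃ τ, WinStratI (restrict T (wOf P (seg x j)))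
              (A ∩ body (restrict T (wOf P (seg x j)))) τ := by
            rw [hwOf]; exact hτw
          have := hcons j hj
          rw [this, stratB_ws hjP hτ', hwOf]
      have hwinw := hτspec.2 x hxw hconsτ
      exact ⟨hwinw.1, hx⟩

/-- If player I has no winning strategy in `G(A ∩ [T]; T)`, then II's
non-losing quasi-strategy `T'` is indeed a quasi-strategy for II in `T`, and
player I has no winning strategy in `G(A ∩ [T'_p]; T'_p)` for any `p ∈ T'`. -/
theorem nonLosing_quasiStrategy (T : Set (List ℕ)) (hT : IsGameTree T)
    (A : Set (ℕ → ℕ)) (hI : ¬ ∃ σ, WinStratI T (A ∩ body T) σ) :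
    QuasiII T (NonLosing T A) ∧
      ∀ p ∈ NonLosing T A,
        ¬ ∃ σ, WinStratI (restrict (NonLosing T A) p)
            (A ∩ body (restrict (NonLosing T A) p)) σ := by
  have hsub : NonLosing T A ⊆ T := fun p hp => hp.1
  have hclosure : ∀ p ∈ NonLosing T A, Even p.length →
      ∀ n, p ++ [n] ∈ T → p ++ [n] ∈ NonLosing T A := by
    intro p hp he n hn
    refine ⟨hn, ?_⟩
    intro r hr hre
    rcases lt_or_ge r.length (p.length + 1) with hl | hl
    · exact hp.2 r (List.prefix_of_prefix_length_le hr (List.prefix_append p [n])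
        (by omega)) hre
    · have hrl : r = p ++ [n] :=
        List.IsPrefix.eq_of_length hr
          (le_antisymm hr.length_le (by simpa using hl))
      exfalso
      rw [hrl] at hre
      simp only [List.length_append, List.length_singleton] at hre
      rw [Nat.even_iff] at hre he
      omega
  have hpre' : ∀ p ∈ NonLosing T A, ∀ r : List ℕ, r <+: p → r ∈ NonLosing T A :=
    fun p hp r hr => nonLosing_prefix hT hp hr
  have hnil : ([] : List ℕ) ∈ NonLosing T A := by
    refine ⟨?_, ?_⟩
    · obtain ⟨p, hp⟩ := hT.1
      exact hT.2.1 p hp [] List.nil_prefix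
    · intro r hr _
      have : r = [] := List.prefix_nil.mp hr
      rw [this, restrict_nil]
      exact hI
  refine ⟨⟨⟨⟨[], hnil⟩, hpre', ?_⟩, hsub, hclosure⟩, fun p hp => nl_no_ws T hT A hp⟩
  intro p hp
  by_cases he : Even p.length
  · obtain ⟨n, hn⟩ := hT.2.2 p hp.1
    exact ⟨n, hclosure p hp he n hn⟩
  · exact nl_extend T hT A hp he
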